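/- arXiv:1703.07345 — 6 statements merged into one kernel-verified Lean document; each statement's English description precedes it below -/
import Mathlib

section
/- The projection problem min_{w : A·𝟙_{supp(w)} ≤ s} ‖w − v‖² is equivalent to the integer linear program max_{x ∈ {0,1}^p, A x ≤ s} ⟨v², x⟩, in the sense that x* solves the ILP if and only if the vector v_{x*} (keeping entries of v on the support of x*) solves the projection problem. -/
/-!
For a binary `x`, the residual of the masked vector is `‖v - v_x‖² = ‖v‖² - ⟨v², x⟩`, while any
`w` satisfies `‖w - v‖² ≥ ‖v‖² - ⟨v², 𝟙_{supp w}⟩`, since `w - v = -v` off the support of `w`.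
So minimizing the distance is maximizing `⟨v², x⟩` over the support indicators, and these range
over the feasible binary points: `𝟙_{supp w}` is binary, and `𝟙_{supp v_x} ≤ x` stays feasible
because `A` is nonnegative.
-/

open Finset

lemma ite_mul_eq_zero_le_of_binary (a : ℝ) {n : ℕ} (hn : n = 0 ∨ n = 1) :
    (if a * n = 0 then 0 else 1) ≤ n := by
  rcases hn with rfl | rfl <;> split_ifs <;> simp_all

variable {ι : Type*} [Fintype ι]

lemma sum_sq_sub_mul_of_binary (v : ι → ℝ) {x : ι → ℕ} (hx : ∀ j, x j = 0 ∨ x j = 1) :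
    ∑ j, (v j - v j * x j) ^ 2 = ∑ j, v j ^ 2 - ∑ j, v j ^ 2 * x j := by
  rw [← sum_sub_distrib]
  refine sum_congr rfl fun j _ => ?_
  rcases hx j with h | h <;> simp [h]

lemma sum_sq_sub_sum_sq_mul_supp_le (v w : ι → ℝ) :
    ∑ j, v j ^ 2 - ∑ j, v j ^ 2 * ((if w j = 0 then 0 else 1 : ℕ) : ℝ) ≤
      ∑ j, (w j - v j) ^ 2 := by
  rw [← sum_sub_distrib]
  refine sum_le_sum fun j _ => ?_
  by_cases h : w j = 0
  · simp [h]
  · simp only [h, if_false, Nat.cast_one, mul_one, sub_self]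
    positivity

open Classical in
theorem stmt2_general {m p : ℕ} (v : Fin p → ℝ) (A : Matrix (Fin m) (Fin p) ℕ)
    (s : Fin m → ℕ) (xs : Fin p → ℕ)
    (hxs : ∀ j, xs j = 0 ∨ xs j = 1) :
    (∀ x : Fin p → ℕ, (∀ j, x j = 0 ∨ x j = 1) → (∀ i, ∑ j, A i j * x j ≤ s i) →
        ∑ j, (v j) ^ 2 * (x j : ℝ) ≤ ∑ j, (v j) ^ 2 * (xs j : ℝ)) ↔
    (∀ w : Fin p → ℝ,
        (∀ i, ∑ j, A i j * (if w j = 0 then 0 else 1) ≤ s i) →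
        ∑ j, (v j - v j * (xs j : ℝ)) ^ 2 ≤ ∑ j, (w j - v j) ^ 2) := by
  rw [sum_sq_sub_mul_of_binary v hxs]
  constructor
  · intro hopt w hw
    have hmax := hopt _ (fun j => by split_ifs <;> simp) hw
    linarith [sum_sq_sub_sum_sq_mul_supp_le v w]
  · intro hopt x hx hfx
    have hfeas (i : Fin m) : ∑ j, A i j * (if v j * x j = 0 then 0 else 1) ≤ s i :=
      (sum_le_sum fun j _ =>
        Nat.mul_le_mul_left _ (ite_mul_eq_zero_le_of_binary (v j) (hx j))).trans (hfx i)
    have hmin := hopt (fun j => v j * x j) hfeas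
    simp only [sub_sq_comm _ (v _), sum_sq_sub_mul_of_binary v hx] at hmin
    linarith

open Classical in
/-- Equivalence of the projection problem onto overlapped cardinality constraints and the
integer linear program: a binary feasible `x*` maximizes `⟨v², x⟩` over binary feasible points
iff `v_{x*}` minimizes `‖w − v‖²` over all `w` whose support indicator is feasible. -/
theorem stmt2 {m p : ℕ} (v : Fin p → ℝ) (A : Matrix (Fin m) (Fin p) ℕ)
    (s : Fin m → ℕ) (xs : Fin p → ℕ)
    (hxs : ∀ j, xs j = 0 ∨ xs j = 1)
    (hfeas : ∀ i, ∑ j, A i j * xs j ≤ s i) :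
    (∀ x : Fin p → ℕ, (∀ j, x j = 0 ∨ x j = 1) → (∀ i, ∑ j, A i j * x j ≤ s i) →
        ∑ j, (v j) ^ 2 * (x j : ℝ) ≤ ∑ j, (v j) ^ 2 * (xs j : ℝ)) ↔
    (∀ w : Fin p → ℝ,
        (∀ i, ∑ j, A i j * (if w j = 0 then 0 else 1) ≤ s i) →
        ∑ j, (v j - v j * (xs j : ℝ)) ^ 2 ≤ ∑ j, (w j - v j) ^ 2) :=
  stmt2_general v A s xs hxs
end

section
/- Let C ∈ {0,1}^{k×p} be a 0/1 matrix whose rows can be partitioned into two blocks such that every column has at most one '1' within each block. Then the matrix A = [𝟙ᵀ; C] obtained by prepending the all-ones row vector to C is totally unimodular. -/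
/-!
The columns of `C` are the edges of a bipartite graph (some with fewer than two endpoints), so every
square submatrix of `C` has determinant `0` or `±1`: either some column has at most one nonzero
entry and one expands along it, or every column has one `1` in each block, and then the rows of one
block minus the rows of the other sum to zero. A square submatrix that contains the row of ones is
reduced to this case by subtracting from that row all rows of the `false` block. This does not
change the determinant, and the new row has a `1` exactly in the columns where the `false` block
has none, so it can join that block.
-/

/-- A matrix is totally unimodular if every square submatrix has determinant in `{-1, 0, 1}`. -/
def IsTotallyUnimodular' {m n : Type*} [Fintype m] [Fintype n]
    (A : Matrix m n ℤ) : Prop :=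
  ∀ (k : ℕ) (r : Fin k → m) (c : Fin k → n),
    Function.Injective r → Function.Injective c →
      (A.submatrix r c).det ∈ ({-1, 0, 1} : Set ℤ)

theorem isTotallyUnimodular'_iff {m n : Type*} [Fintype m] [Fintype n] (A : Matrix m n ℤ) :
    IsTotallyUnimodular' A ↔ A.IsTotallyUnimodular := by
  have hrange : Set.range (SignType.cast : SignType → ℤ) = {-1, 0, 1} := by
    rw [SignType.range_eq]
    ext
    simp only [Set.mem_insert_iff, Set.mem_singleton_iff]
    tauto
  rw [IsTotallyUnimodular', Matrix.IsTotallyUnimodular, hrange]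

theorem Finset.sum_le_one_of_eq_zero_or_eq_one {ι R : Type*} [AddCommMonoidWithOne R]
    [PartialOrder R] [ZeroLEOneClass R] {s : Finset ι} {f : ι → R}
    (h01 : ∀ i ∈ s, f i = 0 ∨ f i = 1)
    (huniq : ∀ i ∈ s, ∀ i' ∈ s, f i = 1 → f i' = 1 → i = i') :
    ∑ i ∈ s, f i ≤ 1 := by
  by_cases h : ∃ i ∈ s, f i = 1
  · obtain ⟨i, hi, hfi⟩ := h
    rw [Finset.sum_eq_single_of_mem i hi fun i' hi' hne =>
      (h01 i' hi').resolve_right fun h1 => hne (huniq i' hi' i hi h1 hfi), hfi]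
  · push Not at h
    rw [Finset.sum_eq_zero fun i hi => (h01 i hi).resolve_right (h i hi)]
    exact zero_le_one

namespace Matrix

theorem det_succ_column_of_eq_zero {R : Type*} [CommRing R] {n : ℕ}
    {M : Matrix (Fin (n + 1)) (Fin (n + 1)) R} {i₀ j : Fin (n + 1)}
    (h : ∀ i ≠ i₀, M i j = 0) :
    M.det = (-1) ^ (i₀ + j : ℕ) * M i₀ j * (M.submatrix i₀.succAbove j.succAbove).det := by
  rw [det_succ_column M j,
    Fintype.sum_eq_single i₀ fun i hi => by rw [h i hi, mul_zero, zero_mul]]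

variable {m m' n n' : Type*}

/-- Transposed, these are the incidence matrices of bipartite graphs with colour classes given
by `B`, where an edge may also have fewer than two endpoints. -/
structure IsBipartiteIncidence (M : Matrix m n ℤ) (B : m → Bool) : Prop where
  eq_zero_or_eq_one : ∀ i j, M i j = 0 ∨ M i j = 1
  eq_of_eq_one : ∀ j i i', B i = B i' → M i j = 1 → M i' j = 1 → i = i'

namespace IsBipartiteIncidence

variable {M : Matrix m n ℤ} {B : m → Bool}

theorem submatrix (hM : IsBipartiteIncidence M B) {f : m' → m} (hf : f.Injective) (g : n' → n) :
    IsBipartiteIncidence (M.submatrix f g) (B ∘ f) where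
  eq_zero_or_eq_one i j := hM.eq_zero_or_eq_one (f i) (g j)
  eq_of_eq_one j _ _ hB hi hi' := hf (hM.eq_of_eq_one (g j) _ _ hB hi hi')

theorem vecMul_sign_eq_zero [Fintype m] (hM : IsBipartiteIncidence M B)
    (htwo : ∀ j, ∃ i i', i ≠ i' ∧ M i j = 1 ∧ M i' j = 1) :
    (fun i => if B i then 1 else -1) ᵥ* M = 0 := by
  funext j
  obtain ⟨i, i', hne, hi, hi'⟩ := htwo j
  have hB : B i ≠ B i' := fun h => hne (hM.eq_of_eq_one j i i' h hi hi')
  have hrest : ∀ k, k ≠ i ∧ k ≠ i' → (if B k then 1 else -1) * M k j = 0 := by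
    rintro k ⟨hki, hki'⟩
    rcases hM.eq_zero_or_eq_one k j with hk | hk
    · rw [hk, mul_zero]
    · have : B k = B i ∨ B k = B i' := by
        revert hB; cases B k <;> cases B i <;> cases B i' <;> decide
      rcases this with h | h
      exacts [absurd (hM.eq_of_eq_one j k i h hk hi) hki,
        absurd (hM.eq_of_eq_one j k i' h hk hi') hki']
  rw [vecMul, dotProduct, Fintype.sum_eq_add i i' hne hrest, hi, hi', Pi.zero_apply]
  revert hB; cases B i <;> cases B i' <;> decide

theorem det_mem_range_signType_cast_of_fin : ∀ {k : ℕ} {M : Matrix (Fin k) (Fin k) ℤ}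
    {B : Fin k → Bool}, IsBipartiteIncidence M B → M.det ∈ Set.range SignType.cast
  | 0, _, _, _ => ⟨1, by simp⟩
  | k + 1, M, B, hM => by
    by_cases hsingle : ∃ j i₀, ∀ i ≠ i₀, M i j = 0
    · obtain ⟨j, i₀, hj⟩ := hsingle
      rw [det_succ_column_of_eq_zero hj]
      obtain ⟨d, hd⟩ := det_mem_range_signType_cast_of_fin
        (hM.submatrix (Fin.succAbove_right_injective (p := i₀)) j.succAbove)
      obtain ⟨a, ha⟩ : M i₀ j ∈ Set.range SignType.cast := by
        rcases hM.eq_zero_or_eq_one i₀ j with h | h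
        exacts [⟨0, h.symm⟩, ⟨1, h.symm⟩]
      exact ⟨(-1) ^ (i₀ + j : ℕ) * a * d, by simp [ha, hd]⟩
    · push Not at hsingle
      refine ⟨0, (exists_vecMul_eq_zero_iff.mp
        ⟨_, fun h => ?_, hM.vecMul_sign_eq_zero fun j => ?_⟩).symm⟩
      · exact absurd (congrFun h 0) (by cases B 0 <;> simp)
      · obtain ⟨i, -, hi⟩ := hsingle j 0
        obtain ⟨i', hne, hi'⟩ := hsingle j i
        exact ⟨i', i, hne, (hM.eq_zero_or_eq_one i' j).resolve_left hi',
          (hM.eq_zero_or_eq_one i j).resolve_left hi⟩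

theorem isTotallyUnimodular (hM : IsBipartiteIncidence M B) : M.IsTotallyUnimodular :=
  fun _ _ _ hf _ => det_mem_range_signType_cast_of_fin (hM.submatrix hf _)

theorem det_mem_range_signType_cast [Fintype m] [DecidableEq m] {M : Matrix m m ℤ}
    (hM : IsBipartiteIncidence M B) : M.det ∈ Set.range SignType.cast := by
  simpa using (isTotallyUnimodular_iff_fintype M).mp hM.isTotallyUnimodular m id id

end IsBipartiteIncidence

section RowOfOnes

variable [Fintype m] [DecidableEq m] {B : m → Bool} {i₀ : m}

theorem isBipartiteIncidence_updateRow_one_sub_sum {M : Matrix m n ℤ}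
    (hM : IsBipartiteIncidence (M.submatrix (Subtype.val : {i // i ≠ i₀} → m) id)
      (B ∘ Subtype.val)) :
    IsBipartiteIncidence
      (M.updateRow i₀ fun j => 1 - ∑ i with i ≠ i₀ ∧ B i = false, M i j)
      (Function.update B i₀ false) := by
  set S : Finset m := {i | i ≠ i₀ ∧ B i = false}
  have h01 : ∀ i ≠ i₀, ∀ j, M i j = 0 ∨ M i j = 1 := fun i hi =>
    hM.eq_zero_or_eq_one ⟨i, hi⟩
  have hnonneg : ∀ i ∈ S, ∀ j, 0 ≤ M i j := fun i hi j => by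
    rcases h01 i (Finset.mem_filter.mp hi).2.1 j with h | h <;> simp [h]
  have hsum_le : ∀ j, ∑ i ∈ S, M i j ≤ 1 := fun j =>
    Finset.sum_le_one_of_eq_zero_or_eq_one (fun i hi => h01 i (Finset.mem_filter.mp hi).2.1 j)
      fun i hi i' hi' hMi hMi' => by
        obtain ⟨hi, hBi⟩ := (Finset.mem_filter.mp hi).2
        obtain ⟨hi', hBi'⟩ := (Finset.mem_filter.mp hi').2
        simpa using hM.eq_of_eq_one j ⟨i, hi⟩ ⟨i', hi'⟩ (hBi.trans hBi'.symm) hMi hMi'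
  have hdisjoint : ∀ j, ∀ i ∈ S, 1 - ∑ i ∈ S, M i j = 1 → M i j = 1 → False := by
    intro j i hi h1 hMi
    have := Finset.single_le_sum (fun k hk => hnonneg k hk j) hi
    linarith
  refine ⟨fun i j => ?_, fun j i i' hB hi hi' => ?_⟩
  · by_cases hi : i = i₀
    · have := Finset.sum_nonneg fun k hk => hnonneg k hk j
      have := hsum_le j
      rw [hi, updateRow_self]
      omega
    · rw [updateRow_ne hi]
      exact h01 i hi j
  · by_cases h : i = i₀ <;> by_cases h' : i' = i₀
    · exact h.trans h'.symm
    · subst h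
      rw [Function.update_self, Function.update_of_ne h'] at hB
      rw [updateRow_self] at hi
      rw [updateRow_ne h'] at hi'
      exact (hdisjoint j i' (by simp [S, h', hB]) hi hi').elim
    · subst h'
      rw [Function.update_self, Function.update_of_ne h] at hB
      rw [updateRow_self] at hi'
      rw [updateRow_ne h] at hi
      exact (hdisjoint j i (by simp [S, h, hB]) hi' hi).elim
    · rw [Function.update_of_ne h, Function.update_of_ne h'] at hB
      rw [updateRow_ne h] at hi
      rw [updateRow_ne h'] at hi'
      simpa using hM.eq_of_eq_one j ⟨i, h⟩ ⟨i', h'⟩ hB hi hi'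

theorem det_mem_range_signType_cast_of_row_eq_one {M : Matrix m m ℤ}
    (hrow : ∀ j, M i₀ j = 1)
    (hM : IsBipartiteIncidence (M.submatrix (Subtype.val : {i // i ≠ i₀} → m) id)
      (B ∘ Subtype.val)) :
    M.det ∈ Set.range SignType.cast := by
  have hdet :
      (M.updateRow i₀ fun j => 1 - ∑ i with i ≠ i₀ ∧ B i = false, M i j).det = M.det := by
    convert det_updateRow_sum_aux M (j := i₀) {i | i ≠ i₀ ∧ B i = false} (by simp)
      (fun _ => -1) 1 using 3
    · ext j
      simp [Finset.sum_apply, hrow, sub_eq_add_neg]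
    · rw [one_smul]
  exact hdet ▸ (isBipartiteIncidence_updateRow_one_sub_sum hM).det_mem_range_signType_cast

end RowOfOnes

theorem IsBipartiteIncidence.isTotallyUnimodular_fromRows_ones {o : Type*} [Subsingleton o]
    {C : Matrix m n ℤ} {B : m → Bool} (hC : IsBipartiteIncidence C B) :
    (fromRows (of fun (_ : o) (_ : n) => (1 : ℤ)) C).IsTotallyUnimodular := by
  intro k f g hf hg
  by_cases htop : ∃ i₀ a, f i₀ = .inl a
  · obtain ⟨i₀, a, hi₀⟩ := htop
    have hinr : ∀ i ≠ i₀, ∃ c, f i = .inr c := by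
      intro i hi
      cases hfi : f i with
      | inl b => exact absurd (hf (by rw [hfi, hi₀, Subsingleton.elim b a])) hi
      | inr c => exact ⟨c, rfl⟩
    choose r hr using hinr
    have hr_inj : (fun i : {i // i ≠ i₀} => r i i.2).Injective := fun i i' h =>
      Subtype.ext (hf (by rw [hr i i.2, hr i' i'.2]; exact congrArg Sum.inr h))
    refine det_mem_range_signType_cast_of_row_eq_one (i₀ := i₀)
      (B := fun i => (f i).elim (fun _ => false) B) (fun j => by simp [hi₀]) ?_
    convert hC.submatrix hr_inj g using 1
    · ext i j
      simp [hr i i.2]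
    · ext i
      simp [hr i i.2]
  · push Not at htop
    have hinr : ∀ i, ∃ c, f i = .inr c := fun i => by
      cases hfi : f i with
      | inl a => exact absurd hfi (htop i a)
      | inr c => exact ⟨c, rfl⟩
    choose f' hf' using hinr
    obtain rfl : f = .inr ∘ f' := funext hf'
    exact hC.isTotallyUnimodular k f' g hf.of_comp hg

end Matrix

/-- If `C` is a 0/1 matrix whose rows are split into two blocks (via `B`) such that each column
has at most one '1' within each block, then prepending the all-ones row yields a totally
unimodular matrix. -/
theorem stmt6 {k p : ℕ} (C : Matrix (Fin k) (Fin p) ℤ) (B : Fin k → Bool)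
    (h01 : ∀ i j, C i j = 0 ∨ C i j = 1)
    (hcol : ∀ (j : Fin p) (b : Bool) (i i' : Fin k),
      B i = b → B i' = b → C i j = 1 → C i' j = 1 → i = i') :
    IsTotallyUnimodular'
      (Matrix.fromRows (Matrix.of fun (_ : Fin 1) (_ : Fin p) => (1 : ℤ)) C) :=
  (isTotallyUnimodular'_iff _).mpr
    (Matrix.IsBipartiteIncidence.isTotallyUnimodular_fromRows_ones
      ⟨h01, fun j i i' hB => hcol j (B i) i i' rfl hB.symm⟩)
end

section
/- If A is a totally unimodular m×p integer matrix and s ∈ ℤ^m is an integer vector, then every vertex (extreme point) of the polytope {x ∈ ℝ^p : A x ≤ s, 0 ≤ x ≤ 1} has all coordinates in {0,1}. -/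
/-!
Write the polytope as `{y | M y ≤ b}` with `M = [A; I; -I]`, which is again totally unimodular,
and `b` integral. At a vertex `x` the active rows of `M` have no common nonzero kernel vector
(otherwise `x ± ε z` would both lie in the polytope), so some `p` of them form an invertible
square submatrix `B`. Its determinant is `±1`, hence `x = B⁻¹ b_B` is integral, and the box
constraints leave only `0` and `1`.
-/

open Matrix Filter Topology

lemma IsTotallyUnimodular'.isTotallyUnimodular {m n : Type*} [Fintype m] [Fintype n]
    {A : Matrix m n ℤ} (hA : IsTotallyUnimodular' A) : A.IsTotallyUnimodular := by
  intro k r c hr hc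
  rcases hA k r c hr hc with h | h | (h : _ = _)
  exacts [⟨-1, by simp [h]⟩, ⟨0, by simp [h]⟩, ⟨1, by simp [h]⟩]

lemma Matrix.IsTotallyUnimodular.fromRows_one_neg_one {m n R : Type*} [CommRing R]
    [DecidableEq n] {A : Matrix m n R} (hA : A.IsTotallyUnimodular) :
    (fromRows A (fromRows (1 : Matrix n n R) (-1 : Matrix n n R))).IsTotallyUnimodular := by
  refine hA.fromRows_unitlike fun _ i => ?_
  rcases i with j | j
  · exact ⟨j, 1, funext fun k => by
      by_cases h : j = k <;> simp [Pi.single_apply, h, eq_comm]⟩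
  · exact ⟨j, -1, funext fun k => by
      by_cases h : j = k <;> simp [Pi.single_apply, h, eq_comm]⟩

lemma Matrix.IsTotallyUnimodular.isUnit_det {n R : Type*} [Fintype n] [DecidableEq n]
    [CommRing R] {B : Matrix n n R} (hB : B.IsTotallyUnimodular) (h : B.det ≠ 0) :
    IsUnit B.det := by
  obtain ⟨s, hs⟩ := (isTotallyUnimodular_iff_fintype B).1 hB n id id
  rw [submatrix_id_id] at hs
  rw [← hs] at h ⊢
  cases s with
  | zero => exact absurd rfl h
  | neg => exact isUnit_one.neg
  | pos => exact isUnit_one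

lemma Matrix.eq_intCast_comp_of_map_mulVec_eq {n K : Type*} [Fintype n] [DecidableEq n]
    [Ring K] {B : Matrix n n ℤ} (hB : IsUnit B.det) {x : n → K} {c : n → ℤ}
    (hx : B.map (↑) *ᵥ x = (↑) ∘ c) : x = (↑) ∘ (B⁻¹ *ᵥ c) := by
  have hinv : (B⁻¹).map (Int.castRingHom K) * B.map (Int.castRingHom K) = 1 := by
    rw [← Matrix.map_mul, nonsing_inv_mul B hB, Matrix.map_one _ (map_zero _) (map_one _)]
  calc x = ((B⁻¹).map (Int.castRingHom K) * B.map (Int.castRingHom K)) *ᵥ x := by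
        rw [hinv, one_mulVec]
    _ = (B⁻¹).map (Int.castRingHom K) *ᵥ ((↑) ∘ c) := by rw [← mulVec_mulVec]; exact congrArg _ hx
    _ = (↑) ∘ (B⁻¹ *ᵥ c) := funext fun i => (RingHom.map_mulVec (Int.castRingHom K) _ _ i).symm

lemma Matrix.span_row_eq_top_of_mulVec_injective {ι n K : Type*} [Finite ι] [Fintype n]
    [Field K] {N : Matrix ι n K} (h : Function.Injective N.mulVec) :
    Submodule.span K (Set.range N.row) = ⊤ := by
  apply Submodule.eq_top_of_finrank_eq
  rw [← rank_eq_finrank_span_row, rank, LinearMap.finrank_range_of_inj h]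

lemma Matrix.exists_isUnit_submatrix_of_span_row_eq_top {ι n K : Type*} [Fintype n]
    [DecidableEq n] [Field K] (M : Matrix ι n K)
    (h : Submodule.span K (Set.range M.row) = ⊤) : ∃ r : n → ι, IsUnit (M.submatrix r id) := by
  obtain ⟨κ, a, -, hspan, hli⟩ := exists_linearIndependent' (K := K) M.row
  let e := (Module.Basis.mk hli (by rw [hspan, h])).indexEquiv (Pi.basisFun K n)
  exact ⟨a ∘ e.symm, linearIndependent_rows_iff_isUnit.1 (hli.comp _ e.symm.injective)⟩

lemma eq_zero_of_mem_extremePoints_of_active {ι n : Type*} [Finite ι] [Fintype n]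
    {M : Matrix ι n ℝ} {b : ι → ℝ} {x z : n → ℝ}
    (hx : x ∈ Set.extremePoints ℝ {y | M *ᵥ y ≤ b})
    (hz : ∀ i, (M *ᵥ x) i = b i → (M *ᵥ z) i = 0) : z = 0 := by
  have hline : ∀ᶠ t in 𝓝 (0 : ℝ), x + t • z ∈ {y | M *ᵥ y ≤ b} := by
    simp only [Set.mem_ofPred_eq, Pi.le_def, eventually_all, mulVec_add, mulVec_smul,
      Pi.add_apply, Pi.smul_apply, smul_eq_mul]
    intro i
    rcases (hx.1 i).eq_or_lt with hact | hslack
    · exact .of_forall fun t => by simp [hz i hact, hact]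
    · have hcont : Tendsto (fun t : ℝ => (M *ᵥ x) i + t * (M *ᵥ z) i) (𝓝 0)
          (𝓝 ((M *ᵥ x) i)) :=
        (continuous_const.add (continuous_id.mul continuous_const)).tendsto' 0 _ (by simp)
      exact (hcont.eventually_lt_const hslack).mono fun _ => le_of_lt
  obtain ⟨ε, hε, hball⟩ := Metric.eventually_nhds_iff.1 hline
  have hseg : x ∈ openSegment ℝ (x + (ε / 2) • z) (x + (-(ε / 2)) • z) :=
    ⟨1 / 2, 1 / 2, by norm_num, by norm_num, by norm_num, by module⟩
  have hclose : |ε| / 2 < ε := by rw [abs_of_pos hε]; exact half_lt_self hε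
  have hfix := hx.2 (hball (by simpa using hclose)) (hball (by simpa using hclose)) hseg
  simpa [(half_pos hε).ne'] using hfix

lemma mulVec_injective_active_of_mem_extremePoints {ι n : Type*} [Finite ι] [Fintype n]
    {M : Matrix ι n ℝ} {b : ι → ℝ} {x : n → ℝ}
    (hx : x ∈ Set.extremePoints ℝ {y | M *ᵥ y ≤ b}) :
    Function.Injective (M.submatrix (Subtype.val : {i // (M *ᵥ x) i = b i} → ι) id).mulVec := by
  intro z₁ z₂ h
  rw [← sub_eq_zero]
  refine eq_zero_of_mem_extremePoints_of_active hx fun i hi => ?_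
  rw [mulVec_sub, Pi.sub_apply, sub_eq_zero]
  exact congrFun h ⟨i, hi⟩

theorem Matrix.IsTotallyUnimodular.exists_intCast_eq_of_mem_extremePoints {ι n : Type*}
    [Fintype ι] [Fintype n] {M : Matrix ι n ℤ} (hM : M.IsTotallyUnimodular) (b : ι → ℤ)
    {x : n → ℝ} (hx : x ∈ Set.extremePoints ℝ {y | M.map (↑) *ᵥ y ≤ (↑) ∘ b}) :
    ∃ u : n → ℤ, x = (↑) ∘ u := by
  classical
  obtain ⟨r, hr⟩ := exists_isUnit_submatrix_of_span_row_eq_top _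
    (span_row_eq_top_of_mulVec_injective (mulVec_injective_active_of_mem_extremePoints hx))
  set B := M.submatrix (Subtype.val ∘ r) id
  have hBdet : B.det ≠ 0 := by
    have hunit : IsUnit (B.map (Int.cast : ℤ → ℝ)).det := (isUnit_iff_isUnit_det _).1 hr
    rw [← Int.cast_det] at hunit
    exact_mod_cast hunit.ne_zero
  refine ⟨B⁻¹ *ᵥ (b ∘ Subtype.val ∘ r),
    eq_intCast_comp_of_map_mulVec_eq ((hM.submatrix _ id).isUnit_det hBdet) ?_⟩
  funext j
  exact (r j).2

lemma setOf_sum_le_and_mem_Icc_eq {m n : Type*} [Fintype n] [DecidableEq n]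
    (A : Matrix m n ℤ) (s : m → ℤ) :
    {y : n → ℝ | (∀ i, ∑ j, (A i j : ℝ) * y j ≤ (s i : ℝ)) ∧ ∀ j, 0 ≤ y j ∧ y j ≤ 1} =
      {y | (fromRows A (fromRows (1 : Matrix n n ℤ) (-1 : Matrix n n ℤ))).map (↑) *ᵥ y ≤
        (↑) ∘ Sum.elim s (Sum.elim 1 0)} := by
  ext y
  simp [Pi.le_def, fromRows_map, fromRows_mulVec, mulVec, dotProduct, forall_and, Sum.forall,
    one_apply, and_comm]

/-- If `A` is totally unimodular and `s` is integer, every extreme point of the polytope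
`{x : Ax ≤ s, 0 ≤ x ≤ 1}` has all coordinates in `{0, 1}`. -/
theorem stmt7 {m p : ℕ} (A : Matrix (Fin m) (Fin p) ℤ)
    (hA : IsTotallyUnimodular' A) (s : Fin m → ℤ) (x : Fin p → ℝ)
    (hx : x ∈ Set.extremePoints ℝ {y : Fin p → ℝ |
        (∀ i, ∑ j, (A i j : ℝ) * y j ≤ (s i : ℝ)) ∧ ∀ j, 0 ≤ y j ∧ y j ≤ 1}) :
    ∀ j, x j = 0 ∨ x j = 1 := by
  have hbox := hx.1.2
  rw [setOf_sum_le_and_mem_Icc_eq] at hx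
  obtain ⟨u, rfl⟩ := hA.isTotallyUnimodular.fromRows_one_neg_one.exists_intCast_eq_of_mem_extremePoints _ hx
  intro j
  obtain ⟨h0, h1⟩ : (0 : ℝ) ≤ u j ∧ (u j : ℝ) ≤ 1 := hbox j
  norm_cast at h0 h1
  rcases (by omega : u j = 0 ∨ u j = 1) with h | h <;> simp [h]
end

section
/- Let A = [𝟙ᵀ; C] where C is the row-indicator matrix of a TVCS group structure (groups within 𝒢₁ pairwise disjoint, groups within 𝒢₂ pairwise disjoint), and let s be a nonnegative integer vector. Then the linear program max{⟨v², x⟩ : A x ≤ s, x ∈ [0,1]^p} attains its maximum at an integer vertex x* ∈ {0,1}^p, and this x* is an optimal solution of the integer linear program max{⟨v², x⟩ : A x ≤ s, x ∈ {0,1}^p}. -/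
/-!
The feasible region `P` is a compact polytope, so by Krein–Milman the linear objective `⟨v², ·⟩`
attains its maximum on `P` at an extreme point, and it suffices that extreme points are binary.
Let `x ∈ P` have a nonempty set `F` of fractional coordinates. The tight groups of `𝒢₁` (completed
by the complement of their union when the total row is tight) and the tight groups of `𝒢₂` are two
disjoint families of sets with integral `x`-sums, so each set meets `F` in `0` or at least `2`
coordinates. Hence these rows, together with the unit rows outside `F`, number at most `p`, and
exactly `p` only when both families partition `F`, in which case their indicator rows have the
same sum. Either way they have rank `< p`, so some `d ≠ 0` supported on `F` is orthogonal to every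
tight row; then `x ± ε d ∈ P` for small `ε > 0`, and `x` is not extreme.
-/

open Finset Matrix Function Filter Topology

theorem IsCompact.exists_mem_extremePoints_isMaxOn {E : Type*} [AddCommGroup E] [Module ℝ E]
    [TopologicalSpace E] [T2Space E] [IsTopologicalAddGroup E] [ContinuousSMul ℝ E]
    [LocallyConvexSpace ℝ E] {s : Set E} (hs : IsCompact s) (hne : s.Nonempty) (l : E →L[ℝ] ℝ) :
    ∃ x ∈ s.extremePoints ℝ, ∀ y ∈ s, l y ≤ l x := by
  have hexp : IsExposed ℝ s {x ∈ s | ∀ y ∈ s, l y ≤ l x} := fun _ => ⟨l, rfl⟩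
  obtain ⟨z, hzs, hz⟩ := hs.exists_isMaxOn hne l.continuous.continuousOn
  obtain ⟨x, hx⟩ := (hexp.isCompact hs).extremePoints_nonempty ⟨z, hzs, hz⟩
  exact ⟨x, hexp.isExtreme.extremePoints_subset_extremePoints hx, hx.1.2⟩

theorem Matrix.exists_mulVec_eq_zero_of_rank_lt {m n K : Type*} [Fintype n] [Field K]
    (M : Matrix m n K) (h : M.rank < Fintype.card n) : ∃ v ≠ 0, M *ᵥ v = 0 := by
  have hrk := LinearMap.finrank_range_add_finrank_ker M.mulVecLin
  rw [Module.finrank_fintype_fun_eq_card] at hrk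
  have hker : LinearMap.ker M.mulVecLin ≠ ⊥ := by
    intro hbot
    rw [hbot, finrank_bot] at hrk
    exact h.ne (by simpa [Matrix.rank] using hrk)
  obtain ⟨v, hv, hv0⟩ := Submodule.exists_mem_ne_zero_of_ne_bot hker
  exact ⟨v, hv0, hv⟩

variable {ι α : Type*}

section Polytope

variable [Fintype α]

def boxPolytope (A : Matrix ι α ℝ) (s : ι → ℝ) : Set (α → ℝ) :=
  {x | (∀ j, 0 ≤ x j ∧ x j ≤ 1) ∧ ∀ i, (A *ᵥ x) i ≤ s i}

theorem isCompact_boxPolytope (A : Matrix ι α ℝ) (s : ι → ℝ) : IsCompact (boxPolytope A s) := by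
  refine (isCompact_univ_pi fun _ => isCompact_Icc (a := (0 : ℝ)) (b := 1)).of_isClosed_subset
    ?_ fun x hx j _ => hx.1 j
  have hP : boxPolytope A s =
      (⋂ j, {x | 0 ≤ x j ∧ x j ≤ 1}) ∩ ⋂ i, {x | (A *ᵥ x) i ≤ s i} := by
    ext x; simp [boxPolytope]
  rw [hP]
  exact (isClosed_iInter fun j => (isClosed_le continuous_const (continuous_apply j)).inter
    (isClosed_le (continuous_apply j) continuous_const)).inter
    (isClosed_iInter fun i => isClosed_le (by fun_prop) continuous_const)

theorem eq_zero_of_mem_extremePoints_boxPolytope [Finite ι] {A : Matrix ι α ℝ} {s : ι → ℝ}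
    {x d : α → ℝ} (hx : x ∈ (boxPolytope A s).extremePoints ℝ)
    (hd : ∀ j, d j ≠ 0 → 0 < x j ∧ x j < 1) (hdA : ∀ i, (A *ᵥ x) i = s i → (A *ᵥ d) i = 0) :
    d = 0 := by
  obtain ⟨⟨hbox, hrow⟩, hext⟩ := hx
  have hlim : ∀ c u : ℝ, Tendsto (fun ε : ℝ => c + ε * u) (𝓝 0) (𝓝 c) := fun c u => by
    have hc : Continuous fun ε : ℝ => c + ε * u := by fun_prop
    simpa using hc.tendsto 0
  have hnear : ∀ᶠ ε in 𝓝 (0 : ℝ), x + ε • d ∈ boxPolytope A s := by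
    refine (eventually_all.2 fun j => ?_).and (eventually_all.2 fun i => ?_)
    · by_cases hdj : d j = 0
      · exact Eventually.of_forall fun ε => by simpa [hdj] using hbox j
      · obtain ⟨h0, h1⟩ := hd j hdj
        filter_upwards [(hlim (x j) (d j)).eventually_const_lt h0,
          (hlim (x j) (d j)).eventually_lt_const h1] with ε h0 h1
        exact ⟨h0.le, h1.le⟩
    · simp only [mulVec_add, mulVec_smul, Pi.add_apply, Pi.smul_apply, smul_eq_mul]
      rcases (hrow i).eq_or_lt with htight | hslack
      · exact Eventually.of_forall fun ε => by simp [htight, hdA i htight]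
      · filter_upwards [(hlim _ ((A *ᵥ d) i)).eventually_lt_const hslack] with ε h
        exact h.le
  have hnear' : ∀ᶠ ε in 𝓝 (0 : ℝ), x + (-ε) • d ∈ boxPolytope A s :=
    (tendsto_neg (0 : ℝ)).eventually (neg_zero (G := ℝ) ▸ hnear)
  obtain ⟨ε, ⟨hplus, hminus⟩, hε⟩ :=
    (((hnear.and hnear').filter_mono nhdsWithin_le_nhds).and
      (self_mem_nhdsWithin (s := Set.Ioi 0))).exists
  have hmid : x ∈ openSegment ℝ (x + ε • d) (x + (-ε) • d) :=
    ⟨1 / 2, 1 / 2, by norm_num, by norm_num, by norm_num, by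
      ext j; simp only [Pi.add_apply, Pi.smul_apply, smul_eq_mul]; ring⟩
  have := hext hplus hminus hmid
  rw [add_eq_left, smul_eq_zero] at this
  exact this.resolve_left hε.ne'

end Polytope

section Combinatorics

theorem Pairwise.disjoint_ite {κ : Type*} {g : κ → Finset α} (hg : Pairwise (Disjoint on g))
    (p : κ → Prop) [DecidablePred p] : Pairwise (Disjoint on fun i => if p i then g i else ∅) :=
  fun i i' h => by
    simp only [onFun]
    split_ifs <;> simp [hg h]

theorem pairwise_disjoint_option_elim {κ : Type*} {C : Finset α} {g : κ → Finset α}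
    (hg : Pairwise (Disjoint on g)) (hC : ∀ i, Disjoint C (g i)) :
    Pairwise (Disjoint on fun o : Option κ => o.elim C g) := by
  rintro (_ | i) (_ | i') h
  · exact absurd rfl h
  · exact hC i'
  · exact (hC i).symm
  · exact hg (by simpa using h)

variable [DecidableEq α]

theorem card_filter_fractional_ne_one {x : α → ℝ} (hx : ∀ j, 0 ≤ x j ∧ x j ≤ 1)
    {B : Finset α} {z : ℤ} (hB : ∑ j ∈ B, x j = z) : #{j ∈ B | 0 < x j ∧ x j < 1} ≠ 1 := by
  intro h
  obtain ⟨a, ha⟩ := card_eq_one.1 h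
  obtain ⟨haB, hxa⟩ := mem_filter.1 (ha ▸ mem_singleton_self a)
  have hbin : ∀ j ∈ B.erase a, x j = if x j = 1 then 1 else 0 := by
    intro j hj
    have hnfrac : ¬ (0 < x j ∧ x j < 1) := fun hfrac =>
      (mem_erase.1 hj).1 (mem_singleton.1 (ha ▸ mem_filter.2 ⟨(mem_erase.1 hj).2, hfrac⟩))
    have := hx j
    split_ifs with h1
    · exact h1
    · by_contra h0
      exact hnfrac ⟨lt_of_le_of_ne this.1 (Ne.symm h0), lt_of_le_of_ne this.2 h1⟩
  rw [← add_sum_erase B x haB, sum_congr rfl hbin, sum_boole] at hB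
  set n := #{j ∈ B.erase a | x j = 1}
  have hxa' : x a = ((z - n : ℤ) : ℝ) := by push_cast; linarith
  rw [hxa'] at hxa
  obtain ⟨h0, h1⟩ := hxa
  have : (0 : ℤ) < z - n := by exact_mod_cast h0
  have : z - n < 1 := by exact_mod_cast h1
  omega

def incidenceMatrix (R : ι → Finset α) : Matrix ι α ℝ :=
  of fun i j => if j ∈ R i then 1 else 0

theorem incidenceMatrix_apply_eq_sum_single (R : ι → Finset α) (i : ι) :
    incidenceMatrix R i = ∑ j ∈ R i, Pi.single j 1 := by
  ext k; simp [incidenceMatrix, sum_pi_single]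

theorem incidenceMatrix_mulVec [Fintype α] (R : ι → Finset α) (y : α → ℝ) (i : ι) :
    (incidenceMatrix R *ᵥ y) i = ∑ j ∈ R i, y j := by
  simp only [mulVec, incidenceMatrix_apply_eq_sum_single, sum_dotProduct, single_dotProduct,
    one_mul]

theorem two_mul_card_le_card_biUnion [Fintype ι] {B : ι → Finset α}
    (hB : Pairwise (Disjoint on B)) (hcard : ∀ i, 2 ≤ #(B i)) :
    2 * Fintype.card ι ≤ #(univ.biUnion B) := by
  rw [card_biUnion (hB.set_pairwise _), mul_comm, ← smul_eq_mul]
  exact card_nsmul_le_sum _ _ _ fun i _ => hcard i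

theorem biUnion_eq_of_two_mul_card_eq [Fintype ι] {B : ι → Finset α} {F : Finset α}
    (hB : Pairwise (Disjoint on B)) (hF : ∀ i, B i ⊆ F) (hcard : ∀ i, 2 ≤ #(B i))
    (h : 2 * Fintype.card ι = #F) : univ.biUnion B = F :=
  eq_of_subset_of_card_le (biUnion_subset.2 fun i _ => hF i)
    (h ▸ two_mul_card_le_card_biUnion hB hcard)

theorem sum_incidenceMatrix_eq_of_two_mul_card_eq [Fintype ι] {B : ι → Finset α} {F : Finset α}
    (hB : Pairwise (Disjoint on B)) (hF : ∀ i, B i ⊆ F) (hcard : ∀ i, 2 ≤ #(B i))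
    (h : 2 * Fintype.card ι = #F) :
    ∑ i, incidenceMatrix B i = ∑ j ∈ F, Pi.single j 1 := by
  simp only [incidenceMatrix_apply_eq_sum_single]
  rw [← sum_biUnion (hB.set_pairwise _), biUnion_eq_of_two_mul_card_eq hB hF hcard h]

variable [Fintype α]

theorem exists_ne_zero_sum_eq_zero_of_subset {ι₁ ι₂ : Type*} [Fintype ι₁] [Fintype ι₂]
    {F : Finset α} (hF : F.Nonempty) {B₁ : ι₁ → Finset α} {B₂ : ι₂ → Finset α}
    (hB₁ : Pairwise (Disjoint on B₁)) (hB₂ : Pairwise (Disjoint on B₂))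
    (hF₁ : ∀ i, B₁ i ⊆ F) (hF₂ : ∀ i, B₂ i ⊆ F)
    (hc₁ : ∀ i, 2 ≤ #(B₁ i)) (hc₂ : ∀ i, 2 ≤ #(B₂ i)) :
    ∃ d : α → ℝ, d ≠ 0 ∧ (∀ j ∉ F, d j = 0) ∧
      (∀ i, ∑ j ∈ B₁ i, d j = 0) ∧ ∀ i, ∑ j ∈ B₂ i, d j = 0 := by
  let M := incidenceMatrix (Sum.elim B₁ (Sum.elim B₂ fun j : ↥Fᶜ => {j.1}))
  suffices hrank : M.rank < Fintype.card α by
    obtain ⟨d, hd0, hd⟩ := M.exists_mulVec_eq_zero_of_rank_lt hrank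
    have hdr := fun r => (incidenceMatrix_mulVec _ d r).symm.trans (congrFun hd r)
    refine ⟨d, hd0, fun j hj => ?_, fun i => hdr (.inl i), fun i => hdr (.inr (.inl i))⟩
    simpa using hdr (.inr (.inr ⟨j, mem_compl.2 hj⟩))
  have hle₁ := (two_mul_card_le_card_biUnion hB₁ hc₁).trans
    (card_le_card (biUnion_subset.2 fun i _ => hF₁ i))
  have hle₂ := (two_mul_card_le_card_biUnion hB₂ hc₂).trans
    (card_le_card (biUnion_subset.2 fun i _ => hF₂ i))
  have hcard : Fintype.card (ι₁ ⊕ ι₂ ⊕ ↥Fᶜ) =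
      Fintype.card ι₁ + Fintype.card ι₂ + (Fintype.card α - #F) := by
    simp [Fintype.card_sum, add_assoc]
  have hFα : #F ≤ Fintype.card α := card_le_univ F
  rcases (M.rank_le_card_height.trans_eq hcard).lt_or_eq with hlt | heq
  · omega
  by_contra hge
  have hF₀ := hF.card_pos
  obtain ⟨hc₁F, hc₂F⟩ : 2 * Fintype.card ι₁ = #F ∧ 2 * Fintype.card ι₂ = #F := by omega
  -- both families partition `F`, so their rows have the same sum
  have hdep : ¬ LinearIndependent ℝ M.row := by
    rw [Fintype.not_linearIndependent_iff]
    obtain ⟨i₁⟩ : Nonempty ι₁ := Fintype.card_pos_iff.1 (by omega)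
    refine ⟨Sum.elim 1 (Sum.elim (-1) 0), ?_, .inl i₁, by simp⟩
    have e₁ := sum_incidenceMatrix_eq_of_two_mul_card_eq hB₁ hF₁ hc₁ hc₁F
    have e₂ := sum_incidenceMatrix_eq_of_two_mul_card_eq hB₂ hF₂ hc₂ hc₂F
    simp only [Fintype.sum_sum_type, Sum.elim_inl, Sum.elim_inr, Pi.one_apply, one_smul,
      Pi.neg_apply, neg_smul, sum_neg_distrib, Pi.zero_apply, zero_smul, sum_const_zero, add_zero,
      M]
    exact (congrArg₂ (· + -·) e₁ e₂).trans (add_neg_cancel _)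
  exact hdep (linearIndependent_iff_card_eq_finrank_span.2 (by
    rw [Set.finrank, ← M.rank_eq_finrank_span_row]; omega))

theorem exists_ne_zero_sum_eq_zero {ι₁ ι₂ : Type*} [Fintype ι₁] [Fintype ι₂]
    {F : Finset α} (hF : F.Nonempty) {B₁ : ι₁ → Finset α} {B₂ : ι₂ → Finset α}
    (hB₁ : Pairwise (Disjoint on B₁)) (hB₂ : Pairwise (Disjoint on B₂))
    (hc₁ : ∀ i, #(B₁ i ∩ F) ≠ 1) (hc₂ : ∀ i, #(B₂ i ∩ F) ≠ 1) :
    ∃ d : α → ℝ, d ≠ 0 ∧ (∀ j ∉ F, d j = 0) ∧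
      (∀ i, ∑ j ∈ B₁ i, d j = 0) ∧ ∀ i, ∑ j ∈ B₂ i, d j = 0 := by
  obtain ⟨d, hd0, hdF, hd₁, hd₂⟩ := exists_ne_zero_sum_eq_zero_of_subset hF
    (B₁ := fun i : {i // (B₁ i ∩ F).Nonempty} => B₁ i ∩ F)
    (B₂ := fun i : {i // (B₂ i ∩ F).Nonempty} => B₂ i ∩ F)
    (fun i i' h => (hB₁ (Subtype.coe_injective.ne h)).mono inter_subset_left inter_subset_left)
    (fun i i' h => (hB₂ (Subtype.coe_injective.ne h)).mono inter_subset_left inter_subset_left)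
    (fun _ => inter_subset_right) (fun _ => inter_subset_right)
    (fun i => by have := hc₁ i; have := i.2.card_pos; omega)
    (fun i => by have := hc₂ i; have := i.2.card_pos; omega)
  have hsum (B : Finset α) (hB : ∀ h : (B ∩ F).Nonempty, ∑ j ∈ B ∩ F, d j = 0) :
      ∑ j ∈ B, d j = 0 := by
    rw [← sum_subset inter_subset_left fun j hj hjF => hdF j fun h => hjF (mem_inter.2 ⟨hj, h⟩)]
    obtain h | h := (B ∩ F).eq_empty_or_nonempty
    · rw [h, sum_empty]
    · exact hB h
  exact ⟨d, hd0, hdF, fun i => hsum _ fun h => hd₁ ⟨i, h⟩, fun i => hsum _ fun h => hd₂ ⟨i, h⟩⟩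

def tvcsRows {κ₁ κ₂ : Type*} (g1 : κ₁ → Finset α) (g2 : κ₂ → Finset α) :
    Unit ⊕ κ₁ ⊕ κ₂ → Finset α :=
  Sum.elim (fun _ => univ) (Sum.elim g1 g2)

theorem exists_direction_tvcs {κ₁ κ₂ : Type*} [Fintype κ₁] [Fintype κ₂]
    {g1 : κ₁ → Finset α} {g2 : κ₂ → Finset α}
    (hg1 : Pairwise (Disjoint on g1)) (hg2 : Pairwise (Disjoint on g2))
    (s : Unit ⊕ κ₁ ⊕ κ₂ → ℤ) {x : α → ℝ} (hx : ∀ j, 0 ≤ x j ∧ x j ≤ 1)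
    (hfrac : ∃ j, 0 < x j ∧ x j < 1) :
    ∃ d : α → ℝ, d ≠ 0 ∧ (∀ j, d j ≠ 0 → 0 < x j ∧ x j < 1) ∧
      ∀ r, ∑ j ∈ tvcsRows g1 g2 r, x j = s r → ∑ j ∈ tvcsRows g1 g2 r, d j = 0 := by
  classical
  let T : Finset κ₁ := {i | ∑ j ∈ g1 i, x j = s (.inr (.inl i))}
  let U := T.biUnion g1
  have hsumU (y : α → ℝ) : ∑ j ∈ U, y j = ∑ i ∈ T, ∑ j ∈ g1 i, y j :=
    sum_biUnion (hg1.set_pairwise _)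
  -- `B₁ none` completes the tight groups of `𝒢₁` to a partition when the total row is tight.
  let B₁ : Option κ₁ → Finset α := fun o => o.elim
    (if ∑ j, x j = s (.inl ()) then univ \ U else ∅) fun i => if i ∈ T then g1 i else ∅
  let B₂ : κ₂ → Finset α := fun i => if ∑ j ∈ g2 i, x j = s (.inr (.inr i)) then g2 i else ∅
  have hB₁ : Pairwise (Disjoint on B₁) :=
    pairwise_disjoint_option_elim (hg1.disjoint_ite _) fun i => by
      split_ifs with _ hi
      · exact sdiff_disjoint.mono_right (subset_biUnion_of_mem g1 hi)
      all_goals simp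
  have hB₂ : Pairwise (Disjoint on B₂) := hg2.disjoint_ite _
  have hite {P : Prop} [Decidable P] {G : Finset α} {z : ℤ} (h : P → ∑ j ∈ G, x j = z) :
      ∃ z : ℤ, ∑ j ∈ if P then G else ∅, x j = z := by
    split_ifs with hP
    exacts [⟨z, h hP⟩, ⟨0, by simp⟩]
  have hz₁ : ∀ o, ∃ z : ℤ, ∑ j ∈ B₁ o, x j = z
    | none => hite (z := s (.inl ()) - ∑ i ∈ T, s (.inr (.inl i))) fun h => by
        rw [sum_sdiff_eq_sub (subset_univ _), h, hsumU,
          sum_congr rfl fun i hi => (mem_filter.1 hi).2]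
        push_cast
        ring
    | some i => hite fun h => (mem_filter.1 h).2
  have hz₂ (i : κ₂) : ∃ z : ℤ, ∑ j ∈ B₂ i, x j = z := hite id
  obtain ⟨d, hd0, hdF, hd₁, hd₂⟩ := exists_ne_zero_sum_eq_zero
    (F := {j | 0 < x j ∧ x j < 1}) (hfrac.imp fun j hj => mem_filter.2 ⟨mem_univ _, hj⟩) hB₁ hB₂
    (fun o => by
      rw [inter_filter, inter_univ]; exact card_filter_fractional_ne_one hx (hz₁ o).choose_spec)
    (fun i => by
      rw [inter_filter, inter_univ]; exact card_filter_fractional_ne_one hx (hz₂ i).choose_spec)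
  refine ⟨d, hd0, fun j hj => by simpa using mt (hdF j) hj, ?_⟩
  rintro (⟨⟩ | i | i) ht <;> simp only [tvcsRows, Sum.elim_inl, Sum.elim_inr] at ht ⊢
  · have h₀ := hd₁ none
    simp only [B₁, Option.elim, if_pos ht] at h₀
    rw [← sum_sdiff (subset_univ U), hsumU, h₀, zero_add]
    exact sum_eq_zero fun i hi => by simpa [B₁, hi] using hd₁ (some i)
  · have hi : i ∈ T := mem_filter.2 ⟨mem_univ _, ht⟩
    simpa [B₁, hi] using hd₁ (some i)
  · simpa [B₂, ht] using hd₂ i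

end Combinatorics

theorem binary_of_mem_extremePoints_tvcs [Fintype α] [DecidableEq α] {κ₁ κ₂ : Type*}
    [Fintype κ₁] [Fintype κ₂] {g1 : κ₁ → Finset α} {g2 : κ₂ → Finset α}
    (hg1 : Pairwise (Disjoint on g1)) (hg2 : Pairwise (Disjoint on g2))
    (s : Unit ⊕ κ₁ ⊕ κ₂ → ℤ) {x : α → ℝ}
    (hx : x ∈ (boxPolytope (incidenceMatrix (tvcsRows g1 g2)) fun r => (s r : ℝ)).extremePoints ℝ)
    (j : α) : x j = 0 ∨ x j = 1 := by
  by_contra hj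
  push Not at hj
  have hbox := hx.1.1
  obtain ⟨d, hd0, hdx, hdA⟩ := exists_direction_tvcs hg1 hg2 s hbox
    ⟨j, lt_of_le_of_ne (hbox j).1 hj.1.symm, lt_of_le_of_ne (hbox j).2 hj.2⟩
  refine hd0 (eq_zero_of_mem_extremePoints_boxPolytope hx hdx fun r hr => ?_)
  rw [incidenceMatrix_mulVec] at hr ⊢
  exact hdA r hr

/-- For a TVCS structure (`𝒢₀ = {[p]}`, `𝒢₁`, `𝒢₂` each consisting of pairwise disjoint groups),
the LP `max{⟨v², x⟩ : Ax ≤ s, x ∈ [0,1]^p}` attains its maximum at a binary point `x*`,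
which is also optimal for the corresponding integer linear program. -/
theorem stmt8 {p k1 k2 : ℕ}
    (g1 : Fin k1 → Finset (Fin p)) (g2 : Fin k2 → Finset (Fin p))
    (h1 : ∀ i i', i ≠ i' → Disjoint (g1 i) (g1 i'))
    (h2 : ∀ i i', i ≠ i' → Disjoint (g2 i) (g2 i'))
    (v : Fin p → ℝ) (s : Unit ⊕ Fin k1 ⊕ Fin k2 → ℤ) (hs : ∀ i, 0 ≤ s i)
    (A : Matrix (Unit ⊕ Fin k1 ⊕ Fin k2) (Fin p) ℝ)
    (hA : ∀ j, A (Sum.inl ()) j = 1 ∧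
      (∀ i, A (Sum.inr (Sum.inl i)) j = if j ∈ g1 i then 1 else 0) ∧
      (∀ i, A (Sum.inr (Sum.inr i)) j = if j ∈ g2 i then 1 else 0)) :
    ∃ xs : Fin p → ℝ,
      (∀ j, xs j = 0 ∨ xs j = 1) ∧
      (∀ i, ∑ j, A i j * xs j ≤ (s i : ℝ)) ∧
      (∀ x : Fin p → ℝ, (∀ i, ∑ j, A i j * x j ≤ (s i : ℝ)) →
        (∀ j, 0 ≤ x j ∧ x j ≤ 1) →
        ∑ j, (v j) ^ 2 * x j ≤ ∑ j, (v j) ^ 2 * xs j) ∧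
      (∀ x : Fin p → ℝ, (∀ j, x j = 0 ∨ x j = 1) →
        (∀ i, ∑ j, A i j * x j ≤ (s i : ℝ)) →
        ∑ j, (v j) ^ 2 * x j ≤ ∑ j, (v j) ^ 2 * xs j) := by
  have hA' : A = incidenceMatrix (tvcsRows g1 g2) := by
    -- `congr` reconciles the `Decidable` instances of the `if`s in `hA` and `incidenceMatrix`.
    ext (_ | i | i) j <;> simp [incidenceMatrix, tvcsRows, hA j] <;> congr
  subst hA'
  have h0 : (0 : Fin p → ℝ) ∈ boxPolytope (incidenceMatrix (tvcsRows g1 g2)) fun r => (s r : ℝ) :=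
    ⟨fun j => by simp, fun r => by simpa using hs r⟩
  obtain ⟨xs, hxs, hmax⟩ := (isCompact_boxPolytope _ _).exists_mem_extremePoints_isMaxOn ⟨0, h0⟩
    (dotProductBilin ℝ ℝ fun j => v j ^ 2).toContinuousLinearMap
  refine ⟨xs, binary_of_mem_extremePoints_tvcs h1 h2 s hxs, hxs.1.2,
    fun x hx hbox => hmax x ⟨hbox, hx⟩, fun x hbin hx => hmax x ⟨fun j => ?_, hx⟩⟩
  rcases hbin j with h | h <;> simp [h]
end

section
/- Let f(z) = ‖[Az − a]₊‖² + ‖Bz − b‖² where [·]₊ is the element-wise positive part, and suppose the minimum of f over the polyhedron Ω = {z : Cz ≤ c} equals 0. Then there exists λ > 0 such that for all z ∈ Ω, f(z) ≥ (λ/2)·‖z − P_{z*}(z)‖², where P_{z*}(z) is the Euclidean projection of z onto the solution set {z : Az ≤ a, Bz = b, Cz ≤ c}. -/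
/-!
Hoffman's error bound, by compactness. If no constant worked, there would be points `z k` with
nearest feasible points `w k` at distance `d k` whose constraint violations are `o(d k)`. Along a
subsequence the directions `(z k - w k) / d k` converge to a unit vector `L`. Every constraint
that `L` strictly increases is then slack at `w k` by a margin proportional to `d k`, so
`w k + (d k / 2) • L` is still feasible, and it is strictly closer to `z k` than `w k` is.
For the theorem, each violation of the system `Az ≤ a, Bz = b, Cz ≤ c` at `z ∈ Ω` is at most
`√(f z)`.
-/

open Filter Topology Metric

section Hoffman

variable {α E ι : Type*} [NormedAddCommGroup E] [NormedSpace ℝ E]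

def polyhedron (g : ι → E →L[ℝ] ℝ) (β : ι → ℝ) : Set E := {x | ∀ i, g i x ≤ β i}

theorem eventually_add_half_mul_le {l : Filter α} {x y d ε : α → ℝ} {β Y : ℝ}
    (hx : ∀ k, x k ≤ β) (hd : ∀ k, 0 ≤ d k) (hviol : ∀ k, x k + d k * y k - β ≤ ε k * d k)
    (hy : Tendsto y l (𝓝 Y)) (hε : Tendsto ε l (𝓝 0)) :
    ∀ᶠ k in l, x k + d k / 2 * Y ≤ β := by
  rcases le_or_gt Y 0 with hY | hY
  · exact .of_forall fun k => by nlinarith [hx k, hd k]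
  · have hdir : ∀ᶠ k in l, ε k - y k < -Y / 2 :=
      (hε.sub hy).eventually_lt_const (by linarith)
    filter_upwards [hdir] with k hk
    nlinarith [hviol k, hd k]

theorem eventually_norm_sub_half_smul_lt {l : Filter α} {u : α → E} {L : E}
    (hu : Tendsto u l (𝓝 L)) (hL : L ≠ 0) :
    ∀ᶠ k in l, ‖u k - (1 / 2 : ℝ) • L‖ < ‖u k‖ := by
  refine ((hu.sub_const _).norm).eventually_lt hu.norm ?_
  rw [show L - (1 / 2 : ℝ) • L = (1 / 2 : ℝ) • L by module, norm_smul]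
  norm_num
  linarith [norm_pos_iff.2 hL]

theorem exists_closer_mem_polyhedron [Finite ι] {l : Filter α} [l.NeBot]
    {g : ι → E →L[ℝ] ℝ} {β : ι → ℝ} {z w u : α → E} {d ε : α → ℝ} {L : E}
    (hw : ∀ k, w k ∈ polyhedron g β) (hd : ∀ k, 0 < d k) (hz : ∀ k, z k = w k + d k • u k)
    (hviol : ∀ k i, g i (z k) - β i ≤ ε k * d k)
    (hu : Tendsto u l (𝓝 L)) (hL : L ≠ 0) (hε : Tendsto ε l (𝓝 0)) :
    ∃ k, ∃ s ∈ polyhedron g β, ‖z k - s‖ < ‖z k - w k‖ := by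
  have hmem : ∀ᶠ k in l, w k + (d k / 2) • L ∈ polyhedron g β := by
    simp only [polyhedron, Set.mem_ofPred_eq, map_add, map_smul, smul_eq_mul, eventually_all]
    intro i
    refine eventually_add_half_mul_le (fun k => hw k i) (fun k => (hd k).le) (fun k => ?_)
      (((g i).continuous.tendsto L).comp hu) hε
    simpa [hz] using hviol k i
  obtain ⟨k, hk_mem, hk_lt⟩ := (hmem.and (eventually_norm_sub_half_smul_lt hu hL)).exists
  refine ⟨k, _, hk_mem, ?_⟩
  have hdk := hd k
  calc ‖z k - (w k + (d k / 2) • L)‖ = d k * ‖u k - (1 / 2 : ℝ) • L‖ := by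
        rw [hz k, show w k + d k • u k - (w k + (d k / 2) • L) = d k • (u k - (1 / 2 : ℝ) • L) by
          module, norm_smul, Real.norm_of_nonneg hdk.le]
    _ < d k * ‖u k‖ := mul_lt_mul_of_pos_left hk_lt hdk
    _ = ‖z k - w k‖ := by rw [hz k, add_sub_cancel_left, norm_smul, Real.norm_of_nonneg hdk.le]

theorem exists_hoffman_constant [Finite ι] [FiniteDimensional ℝ E]
    (g : ι → E →L[ℝ] ℝ) (β : ι → ℝ) :
    ∃ K > 0, ∀ z w : E, ∀ r : ℝ, 0 ≤ r → (∀ i, g i z - β i ≤ r) → w ∈ polyhedron g β →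
      (∀ v ∈ polyhedron g β, ‖z - w‖ ≤ ‖z - v‖) → ‖z - w‖ ≤ K * r := by
  by_contra! h
  choose z w r hr hviol hw hnear hlt using fun k : ℕ => h (k + 1) k.cast_add_one_pos
  set d := fun k => ‖z k - w k‖
  have hd : ∀ k, 0 < d k := fun k =>
    (mul_nonneg k.cast_add_one_pos.le (hr k)).trans_lt (hlt k)
  have hu : ∀ k, (d k)⁻¹ • (z k - w k) ∈ sphere (0 : E) 1 := fun k => by
    simpa using norm_smul_inv_norm (𝕜 := ℝ) (norm_pos_iff.1 (hd k))
  obtain ⟨L, hL, φ, hφ, hlim⟩ := (isCompact_sphere (0 : E) 1).tendsto_subseq hu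
  have hε : Tendsto (fun k => r k / d k) atTop (𝓝 0) := by
    refine tendsto_of_tendsto_of_tendsto_of_le_of_le tendsto_const_nhds
      tendsto_one_div_add_atTop_nhds_zero_nat (fun k => div_nonneg (hr k) (hd k).le)
      (fun k => ?_)
    rw [div_le_div_iff₀ (hd k) k.cast_add_one_pos]
    linarith [hlt k]
  obtain ⟨k, s, hs, hcloser⟩ := exists_closer_mem_polyhedron (l := atTop) (z := z ∘ φ)
    (w := w ∘ φ) (d := d ∘ φ) (ε := (fun k => r k / d k) ∘ φ) (fun k => hw (φ k))
    (fun k => hd (φ k)) (fun k => by simp [smul_inv_smul₀ (hd (φ k)).ne'])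
    (fun k i => by simpa [div_mul_cancel₀ _ (hd (φ k)).ne'] using hviol (φ k) i) hlim
    (ne_zero_of_mem_unit_sphere ⟨L, hL⟩) (hε.comp hφ.tendsto_atTop)
  exact hcloser.not_ge (hnear (φ k) s hs)

end Hoffman

noncomputable section LinearSystem

variable {m₁ m₂ m₃ n : Type*} [Fintype n]

def rowFunctional (v : n → ℝ) : EuclideanSpace ℝ n →L[ℝ] ℝ := ∑ j, v j • EuclideanSpace.proj j

@[simp]
theorem rowFunctional_apply (v : n → ℝ) (x : EuclideanSpace ℝ n) :
    rowFunctional v x = ∑ j, v j * x j := by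
  simp [rowFunctional]

/-- `Az ≤ a, Bz = b, Cz ≤ c` as one system of inequalities, `Bz = b` being split into
`Bz ≤ b` and `-Bz ≤ -b`. -/
def stackedRows (A : Matrix m₁ n ℝ) (B : Matrix m₂ n ℝ) (C : Matrix m₃ n ℝ) :
    m₁ ⊕ m₂ ⊕ m₂ ⊕ m₃ → EuclideanSpace ℝ n →L[ℝ] ℝ :=
  Sum.elim (fun i => rowFunctional (A i)) <| Sum.elim (fun i => rowFunctional (B i)) <|
    Sum.elim (fun i => -rowFunctional (B i)) (fun i => rowFunctional (C i))

def stackedRhs (a : m₁ → ℝ) (b : m₂ → ℝ) (c : m₃ → ℝ) : m₁ ⊕ m₂ ⊕ m₂ ⊕ m₃ → ℝ :=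
  Sum.elim a <| Sum.elim b <| Sum.elim (-b) c

theorem norm_sub_sq_eq_sum (x y : EuclideanSpace ℝ n) : ‖x - y‖ ^ 2 = ∑ j, (x j - y j) ^ 2 := by
  simp [EuclideanSpace.norm_sq_eq]

theorem mem_polyhedron_stackedRows {A : Matrix m₁ n ℝ} {B : Matrix m₂ n ℝ} {C : Matrix m₃ n ℝ}
    {a : m₁ → ℝ} {b : m₂ → ℝ} {c : m₃ → ℝ} {x : EuclideanSpace ℝ n} :
    x ∈ polyhedron (stackedRows A B C) (stackedRhs a b c) ↔
      (∀ i, ∑ j, A i j * x j ≤ a i) ∧ (∀ i, ∑ j, B i j * x j = b i) ∧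
        (∀ i, ∑ j, C i j * x j ≤ c i) := by
  simp only [polyhedron, Set.mem_ofPred_eq, Sum.forall, stackedRows, stackedRhs, Sum.elim_inl,
    Sum.elim_inr, neg_apply, rowFunctional_apply, Pi.neg_apply, neg_le_neg_iff,
    le_antisymm_iff, forall_and, and_assoc]

theorem stackedRows_sub_stackedRhs_le_sqrt {A : Matrix m₁ n ℝ} {B : Matrix m₂ n ℝ}
    {C : Matrix m₃ n ℝ} {a : m₁ → ℝ} {b : m₂ → ℝ} {c : m₃ → ℝ} [Fintype m₁] [Fintype m₂]
    {x : EuclideanSpace ℝ n} (hC : ∀ i, ∑ j, C i j * x j ≤ c i) (k : m₁ ⊕ m₂ ⊕ m₂ ⊕ m₃) :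
    stackedRows A B C k x - stackedRhs a b c k ≤
      √(∑ i, max (∑ j, A i j * x j - a i) 0 ^ 2 + ∑ i, (∑ j, B i j * x j - b i) ^ 2) := by
  set fA := ∑ i, max (∑ j, A i j * x j - a i) 0 ^ 2
  set fB := ∑ i, (∑ j, B i j * x j - b i) ^ 2
  have hA (i : m₁) : max (∑ j, A i j * x j - a i) 0 ^ 2 ≤ fA + fB :=
    le_add_of_le_of_nonneg (Finset.single_le_sum (f := fun i => max (∑ j, A i j * x j - a i) 0 ^ 2)
      (fun i _ => sq_nonneg _) (Finset.mem_univ i))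
      (Finset.sum_nonneg fun i _ => sq_nonneg _)
  have hB (i : m₂) : (∑ j, B i j * x j - b i) ^ 2 ≤ fA + fB :=
    le_add_of_nonneg_of_le (Finset.sum_nonneg fun i _ => sq_nonneg _)
      (Finset.single_le_sum (f := fun i => (∑ j, B i j * x j - b i) ^ 2)
        (fun i _ => sq_nonneg _) (Finset.mem_univ i))
  rcases k with i | i | i | i <;>
    simp only [stackedRows, stackedRhs, Sum.elim_inl, Sum.elim_inr, neg_apply,
      rowFunctional_apply, Pi.neg_apply]
  · exact (le_max_left _ _).trans (Real.le_sqrt_of_sq_le (hA i))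
  · exact Real.le_sqrt_of_sq_le (hB i)
  · linarith [Real.neg_sqrt_le_of_sq_le (hB i)]
  · linarith [hC i, Real.sqrt_nonneg (fA + fB)]

end LinearSystem

theorem stmt10_general {m1 m2 m3 n : ℕ}
    (A : Matrix (Fin m1) (Fin n) ℝ) (a : Fin m1 → ℝ)
    (B : Matrix (Fin m2) (Fin n) ℝ) (b : Fin m2 → ℝ)
    (C : Matrix (Fin m3) (Fin n) ℝ) (c : Fin m3 → ℝ)
    (f : (Fin n → ℝ) → ℝ)
    (hf : ∀ z, f z = ∑ i, max (∑ j, A i j * z j - a i) 0 ^ 2 +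
                     ∑ i, (∑ j, B i j * z j - b i) ^ 2) :
    ∃ lam : ℝ, 0 < lam ∧
      ∀ z : Fin n → ℝ, (∀ i, ∑ j, C i j * z j ≤ c i) →
        ∀ w : Fin n → ℝ,
          ((∀ i, ∑ j, A i j * w j ≤ a i) ∧ (∀ i, ∑ j, B i j * w j = b i) ∧
            (∀ i, ∑ j, C i j * w j ≤ c i)) →
          (∀ u : Fin n → ℝ,
            ((∀ i, ∑ j, A i j * u j ≤ a i) ∧ (∀ i, ∑ j, B i j * u j = b i) ∧
              (∀ i, ∑ j, C i j * u j ≤ c i)) →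
            ∑ j, (z j - w j) ^ 2 ≤ ∑ j, (z j - u j) ^ 2) →
          f z ≥ lam / 2 * ∑ j, (z j - w j) ^ 2 := by
  obtain ⟨K, hK, hbound⟩ := exists_hoffman_constant (stackedRows A B C) (stackedRhs a b c)
  refine ⟨2 / K ^ 2, by positivity, fun z hz w hw hnear => ?_⟩
  have hf0 : 0 ≤ f z := by rw [hf]; positivity
  have hdist : ‖WithLp.toLp 2 z - WithLp.toLp 2 w‖ ≤ K * √(f z) := by
    refine hbound _ _ _ (Real.sqrt_nonneg _)
      (fun k => hf z ▸ stackedRows_sub_stackedRhs_le_sqrt hz k)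
      (mem_polyhedron_stackedRows.2 hw) fun v hv => ?_
    rw [← pow_le_pow_iff_left₀ (norm_nonneg _) (norm_nonneg _) two_ne_zero, norm_sub_sq_eq_sum,
      norm_sub_sq_eq_sum]
    exact hnear v.ofLp (mem_polyhedron_stackedRows.1 hv)
  have hsq : ∑ j, (z j - w j) ^ 2 ≤ K ^ 2 * f z := by
    calc ∑ j, (z j - w j) ^ 2 = ‖WithLp.toLp 2 z - WithLp.toLp 2 w‖ ^ 2 :=
          (norm_sub_sq_eq_sum _ _).symm
      _ ≤ (K * √(f z)) ^ 2 := pow_le_pow_left₀ (norm_nonneg _) hdist 2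
      _ = K ^ 2 * f z := by rw [mul_pow, Real.sq_sqrt hf0]
  calc 2 / K ^ 2 / 2 * ∑ j, (z j - w j) ^ 2 = (∑ j, (z j - w j) ^ 2) / K ^ 2 := by ring
    _ ≤ f z := (div_le_iff₀' (by positivity)).2 hsq

/-- Hoffman-type error bound: if `f(z) = ‖[Az − a]₊‖² + ‖Bz − b‖²` has minimum value `0` over
`Ω = {z : Cz ≤ c}`, then there is `λ > 0` such that for every `z ∈ Ω`,
`f(z) ≥ (λ/2)‖z − P_{z*}(z)‖²`, where `P_{z*}(z)` is the nearest point to `z` in the solution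
set `{Az ≤ a, Bz = b, Cz ≤ c}`. -/
theorem stmt10 {m1 m2 m3 n : ℕ}
    (A : Matrix (Fin m1) (Fin n) ℝ) (a : Fin m1 → ℝ)
    (B : Matrix (Fin m2) (Fin n) ℝ) (b : Fin m2 → ℝ)
    (C : Matrix (Fin m3) (Fin n) ℝ) (c : Fin m3 → ℝ)
    (f : (Fin n → ℝ) → ℝ)
    (hf : ∀ z, f z = ∑ i, max (∑ j, A i j * z j - a i) 0 ^ 2 +
                     ∑ i, (∑ j, B i j * z j - b i) ^ 2)
    (hmin : ∃ z, (∀ i, ∑ j, C i j * z j ≤ c i) ∧ f z = 0) :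
    ∃ lam : ℝ, 0 < lam ∧
      ∀ z : Fin n → ℝ, (∀ i, ∑ j, C i j * z j ≤ c i) →
        ∀ w : Fin n → ℝ,
          ((∀ i, ∑ j, A i j * w j ≤ a i) ∧ (∀ i, ∑ j, B i j * w j = b i) ∧
            (∀ i, ∑ j, C i j * w j ≤ c i)) →
          (∀ u : Fin n → ℝ,
            ((∀ i, ∑ j, A i j * u j ≤ a i) ∧ (∀ i, ∑ j, B i j * u j = b i) ∧
              (∀ i, ∑ j, C i j * u j ≤ c i)) →
            ∑ j, (z j - w j) ^ 2 ≤ ∑ j, (z j - u j) ^ 2) →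
          f z ≥ lam / 2 * ∑ j, (z j - w j) ^ 2 :=
  stmt10_general A a B b C c f hf
end

section
/- Let f(z) = ‖[Az − a]₊‖² + ‖Bz − b‖² with min over Ω = {z : Cz ≤ c} equal to 0, let L be the Lipschitz constant of ∇f, and suppose the error bound f(z) ≥ (λ/2)‖z − P_{z*}(z)‖² holds on Ω for some λ > 0. Then projected gradient descent z^{t+1} = P_Ω(z^t − (1/L)∇f(z^t)) satisfies ‖z^{t+1} − P_{z*}(z^{t+1})‖² ≤ (1/(1 + λ/L))·‖z^t − P_{z*}(z^t)‖², i.e., the distance to the optimal set converges linearly. -/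
/-!
The objective `f` is convex and the given `∇f` is a continuous subgradient field of it, which
already makes `∇f` its gradient; the Lipschitz bound on `∇f` then gives the descent lemma
`f y ≤ f x + ⟪∇f x, y - x⟫ + L/2 ‖y - x‖²`. Together with the variational inequality of the
projection onto `Ω` this yields, for every `w ∈ Ω`,
`f z⁺ ≤ f w + L/2 (‖z - w‖² - ‖z⁺ - w‖²)`.
Take `w = P_{z*}(z)`, where `f` vanishes, bound `f z⁺` below by the error bound, and use
`‖z⁺ - P_{z*}(z⁺)‖ ≤ ‖z⁺ - P_{z*}(z)‖`: this gives
`(L + λ) ‖z⁺ - P_{z*}(z⁺)‖² ≤ L ‖z - P_{z*}(z)‖²`.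
-/

open Filter Topology
open scoped RealInnerProductSpace

section InnerProductSpace

variable {E : Type*} [NormedAddCommGroup E] [InnerProductSpace ℝ E] {f : E → ℝ} {g : E → E}

theorem hasGradientAt_of_subgradient [CompleteSpace E]
    (hsub : ∀ x y, f x + ⟪g x, y - x⟫ ≤ f y) {x : E} (hg : ContinuousAt g x) :
    HasGradientAt f (g x) x := by
  -- the remainder `f (x + h) - f x - ⟪g x, h⟫` lies between `0` and `⟪g (x + h) - g x, h⟫`
  rw [hasGradientAt_iff_isLittleO_nhds_zero, Asymptotics.isLittleO_iff]
  intro ε hε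
  have hshift : Tendsto (fun h => g (x + h)) (𝓝 0) (𝓝 (g x)) :=
    hg.tendsto.comp ((continuous_const_add x).tendsto' 0 x (add_zero x))
  filter_upwards [(Metric.tendsto_nhds.1 hshift) ε hε] with h hh
  have lower := hsub x (x + h)
  have upper := hsub (x + h) x
  have hcs : ⟪g (x + h) - g x, h⟫ ≤ ε * ‖h‖ :=
    (real_inner_le_norm _ _).trans
      (mul_le_mul_of_nonneg_right (by rw [← dist_eq_norm]; exact hh.le) (norm_nonneg _))
  rw [add_sub_cancel_left] at lower
  rw [sub_add_cancel_left, inner_neg_right] at upper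
  rw [inner_sub_left] at hcs
  rw [Real.norm_eq_abs, abs_le]
  constructor <;> linarith

theorem le_add_inner_add_of_lipschitzWith [CompleteSpace E]
    (hf : ∀ x, HasGradientAt f (g x) x) {K : NNReal} (hg : LipschitzWith K g) (x y : E) :
    f y ≤ f x + ⟪g x, y - x⟫ + K / 2 * ‖y - x‖ ^ 2 := by
  set d := y - x
  let φ : ℝ → ℝ := fun t => f (x + t • d) - t * ⟪g x, d⟫ - K / 2 * t ^ 2 * ‖d‖ ^ 2
  have hφ (t : ℝ) : HasDerivAt φ (⟪g (x + t • d), d⟫ - ⟪g x, d⟫ - K * t * ‖d‖ ^ 2) t := by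
    have hline : HasDerivAt (fun t : ℝ => x + t • d) d t := by
      simpa using ((hasDerivAt_id t).smul_const d).const_add x
    have hfline := (hf (x + t • d)).hasFDerivAt.comp_hasDerivAt t hline
    have hquad : HasDerivAt (fun t : ℝ => K / 2 * t ^ 2 * ‖d‖ ^ 2) (K * t * ‖d‖ ^ 2) t := by
      refine ((hasDerivAt_pow 2 t).const_mul ((K : ℝ) / 2)).mul_const (‖d‖ ^ 2)
        |>.congr_deriv ?_
      push_cast
      ring
    exact (hfline.sub ((hasDerivAt_id t).mul_const _)).sub hquad |>.congr_deriv (by simp)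
  have hφ' : ∀ t ∈ interior (Set.Ici (0 : ℝ)), deriv φ t ≤ 0 := by
    intro t ht
    rw [interior_Ici, Set.mem_Ioi] at ht
    rw [(hφ t).deriv, sub_nonpos, ← inner_sub_left]
    calc ⟪g (x + t • d) - g x, d⟫
        ≤ ‖g (x + t • d) - g x‖ * ‖d‖ := real_inner_le_norm _ _
      _ ≤ K * ‖t • d‖ * ‖d‖ := by
        gcongr
        simpa using hg.norm_sub_le (x + t • d) x
      _ = K * t * ‖d‖ ^ 2 := by rw [norm_smul, Real.norm_of_nonneg ht.le]; ring
  have hanti : AntitoneOn φ (Set.Ici 0) :=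
    antitoneOn_of_deriv_nonpos (convex_Ici 0)
      (fun t _ => (hφ t).continuousAt.continuousWithinAt)
      (fun t _ => (hφ t).differentiableAt.differentiableWithinAt) hφ'
  have h01 := hanti Set.self_mem_Ici (Set.mem_Ici.2 zero_le_one) zero_le_one
  simp only [φ, d, one_smul, zero_smul, add_zero, add_sub_cancel] at h01
  norm_num at h01
  linarith

theorem IsMinOn.real_inner_sub_le_zero {K : Set E} (hK : Convex ℝ K) {x p u : E} (hp : p ∈ K)
    (hmin : IsMinOn (fun v => ‖v - x‖) K p) (hu : u ∈ K) : ⟪x - p, u - p⟫ ≤ 0 := by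
  have : Nonempty K := ⟨⟨p, hp⟩⟩
  refine (norm_eq_iInf_iff_real_inner_le_zero hK hp).1 (le_antisymm ?_ ?_) u hu
  · exact le_ciInf fun v => by simpa only [norm_sub_rev x] using isMinOn_iff.1 hmin v v.2
  · have hbdd : BddBelow (Set.range fun v : K => ‖x - v‖) :=
      ⟨0, Set.forall_mem_range.2 fun _ => norm_nonneg _⟩
    exact ciInf_le hbdd ⟨p, hp⟩

theorem projGradStep_le_add {K : Set E} (hK : Convex ℝ K) {L : ℝ} (hL : 0 < L)
    (hsub : ∀ x y, f x + ⟪g x, y - x⟫ ≤ f y)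
    (hdesc : ∀ x y, f y ≤ f x + ⟪g x, y - x⟫ + L / 2 * ‖y - x‖ ^ 2)
    {z z' w : E} (hz' : z' ∈ K) (hproj : IsMinOn (fun u => ‖u - (z - L⁻¹ • g z)‖) K z')
    (hw : w ∈ K) :
    f z' ≤ f w + L / 2 * (‖z - w‖ ^ 2 - ‖z' - w‖ ^ 2) := by
  have hstep : ⟪g z, z' - w⟫ ≤ -L * ⟪z' - z, z' - w⟫ := by
    have hvi := hproj.real_inner_sub_le_zero hK hz' hw
    rw [show z - L⁻¹ • g z - z' = -(L⁻¹ • g z + (z' - z)) by abel,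
      show w - z' = -(z' - w) by abel, inner_neg_neg, inner_add_left,
      real_inner_smul_left] at hvi
    have := mul_le_mul_of_nonneg_left hvi hL.le
    rw [mul_add, ← mul_assoc, mul_inv_cancel₀ hL.ne', one_mul, mul_zero] at this
    linarith
  have hgrad : ⟪g z, z' - w⟫ = ⟪g z, z' - z⟫ - ⟪g z, w - z⟫ := by
    rw [← inner_sub_right, sub_sub_sub_cancel_right]
  have hpol : ‖z - w‖ ^ 2 = ‖z' - z‖ ^ 2 - 2 * ⟪z' - z, z' - w⟫ + ‖z' - w‖ ^ 2 := by
    rw [← norm_sub_sq_real, sub_sub_sub_cancel_left, norm_sub_rev]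
  rw [hpol]
  linarith [hsub z w, hdesc z z']

end InnerProductSpace

section Residual

open Matrix Finset

theorem max_zero_sq_add_two_mul_le (s t : ℝ) :
    max s 0 ^ 2 + 2 * max s 0 * (t - s) ≤ max t 0 ^ 2 := by
  rcases le_total s 0 with hs | hs <;> rcases le_total t 0 with ht | ht <;>
    simp only [max_eq_right, max_eq_left, hs, ht] <;> nlinarith [sq_nonneg (t - s)]

variable {ι κ : Type*} [Fintype ι] [Fintype κ]

theorem sum_comp_mulVec_sub_add_dotProduct_le (M : Matrix ι κ ℝ) (v : ι → ℝ) {φ φ' : ℝ → ℝ}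
    (hφ : ∀ s t, φ s + φ' s * (t - s) ≤ φ t) (x y : κ → ℝ) :
    ∑ i, φ ((M *ᵥ x) i - v i) + (Mᵀ *ᵥ fun i => φ' ((M *ᵥ x) i - v i)) ⬝ᵥ (y - x) ≤
      ∑ i, φ ((M *ᵥ y) i - v i) := by
  rw [mulVec_transpose, ← dotProduct_mulVec, mulVec_sub, dotProduct, ← sum_add_distrib]
  refine sum_le_sum fun i _ => ?_
  have := hφ ((M *ᵥ x) i - v i) ((M *ᵥ y) i - v i)
  rwa [sub_sub_sub_cancel_right] at this

variable {ι' : Type*} [Fintype ι']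

theorem residual_add_dotProduct_le (A : Matrix ι κ ℝ) (a : ι → ℝ) (B : Matrix ι' κ ℝ)
    (b : ι' → ℝ) {f : (κ → ℝ) → ℝ}
    (hf : ∀ z, f z = ∑ i, max (∑ j, A i j * z j - a i) 0 ^ 2 +
      ∑ i, (∑ j, B i j * z j - b i) ^ 2)
    {gradf : (κ → ℝ) → (κ → ℝ)}
    (hgradf : ∀ z k, gradf z k = 2 * ∑ i, A i k * max (∑ j, A i j * z j - a i) 0 +
        2 * ∑ i, B i k * (∑ j, B i j * z j - b i))
    (x y : κ → ℝ) : f x + gradf x ⬝ᵥ (y - x) ≤ f y := by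
  have hf' : ∀ z, f z = ∑ i, max ((A *ᵥ z) i - a i) 0 ^ 2 + ∑ i, ((B *ᵥ z) i - b i) ^ 2 :=
    hf
  have hgx : gradf x = Aᵀ *ᵥ (fun i => 2 * max ((A *ᵥ x) i - a i) 0) +
      Bᵀ *ᵥ (fun i => 2 * ((B *ᵥ x) i - b i)) := by
    ext k
    simp only [hgradf, Pi.add_apply, mulVec, dotProduct, transpose_apply, mul_sum,
      mul_left_comm]
  have hA := sum_comp_mulVec_sub_add_dotProduct_le A a max_zero_sq_add_two_mul_le x y
  have hB := sum_comp_mulVec_sub_add_dotProduct_le B b (φ := fun s => s ^ 2)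
    (φ' := fun s => 2 * s) (fun s t => by nlinarith [sq_nonneg (t - s)]) x y
  rw [hf', hf', hgx, add_dotProduct]
  linarith

theorem residual_eq_zero (A : Matrix ι κ ℝ) (a : ι → ℝ) (B : Matrix ι' κ ℝ)
    (b : ι' → ℝ) {f : (κ → ℝ) → ℝ}
    (hf : ∀ z, f z = ∑ i, max (∑ j, A i j * z j - a i) 0 ^ 2 +
      ∑ i, (∑ j, B i j * z j - b i) ^ 2)
    {w : κ → ℝ} (hA : ∀ i, ∑ j, A i j * w j ≤ a i) (hB : ∀ i, ∑ j, B i j * w j = b i) :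
    f w = 0 := by
  simp [hf, max_eq_right (sub_nonpos.2 (hA _)), hB]

end Residual

section Euclidean

open Finset

variable {ι κ : Type*} [Fintype κ]

theorem sum_sub_sq_eq_norm_toLp_sub_sq (x y : κ → ℝ) :
    ∑ j, (x j - y j) ^ 2 = ‖WithLp.toLp 2 x - WithLp.toLp 2 y‖ ^ 2 := by
  simp [EuclideanSpace.real_norm_sq_eq]

theorem convex_setOf_sum_mul_le (C : Matrix ι κ ℝ) (c : ι → ℝ) :
    Convex ℝ {x : EuclideanSpace ℝ κ | ∀ i, ∑ j, C i j * x j ≤ c i} := by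
  intro x hx y hy s t hs ht hst i
  simp only [PiLp.add_apply, PiLp.smul_apply, smul_eq_mul, mul_add,
    sum_add_distrib, mul_left_comm _ s, mul_left_comm _ t, ← mul_sum]
  calc s * ∑ j, C i j * x j + t * ∑ j, C i j * y j ≤ s * c i + t * c i := by
        gcongr
        exacts [hx i, hy i]
    _ = c i := by rw [← add_mul, hst, one_mul]

end Euclidean

theorem stmt11_general {m1 m2 m3 n : ℕ}
    (A : Matrix (Fin m1) (Fin n) ℝ) (a : Fin m1 → ℝ)
    (B : Matrix (Fin m2) (Fin n) ℝ) (b : Fin m2 → ℝ)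
    (C : Matrix (Fin m3) (Fin n) ℝ) (c : Fin m3 → ℝ)
    (f : (Fin n → ℝ) → ℝ)
    (hf : ∀ z, f z = ∑ i, max (∑ j, A i j * z j - a i) 0 ^ 2 +
                     ∑ i, (∑ j, B i j * z j - b i) ^ 2)
    (gradf : (Fin n → ℝ) → (Fin n → ℝ))
    (hgradf : ∀ z k, gradf z k =
        2 * ∑ i, A i k * max (∑ j, A i j * z j - a i) 0 +
        2 * ∑ i, B i k * (∑ j, B i j * z j - b i))
    (L lam : ℝ) (hL : 0 < L) (hlam : 0 < lam)
    -- L-Lipschitz continuity of the gradient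
    (hLip : ∀ z w : Fin n → ℝ,
      ∑ k, (gradf z k - gradf w k) ^ 2 ≤ L ^ 2 * ∑ k, (z k - w k) ^ 2)
    -- error bound on Ω: f(z) ≥ (λ/2)‖z − P_{z*}(z)‖²
    (herr : ∀ z : Fin n → ℝ, (∀ i, ∑ j, C i j * z j ≤ c i) →
      ∀ w : Fin n → ℝ,
        ((∀ i, ∑ j, A i j * w j ≤ a i) ∧ (∀ i, ∑ j, B i j * w j = b i) ∧
          (∀ i, ∑ j, C i j * w j ≤ c i)) →
        (∀ u : Fin n → ℝ,
          ((∀ i, ∑ j, A i j * u j ≤ a i) ∧ (∀ i, ∑ j, B i j * u j = b i) ∧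
            (∀ i, ∑ j, C i j * u j ≤ c i)) →
          ∑ j, (z j - w j) ^ 2 ≤ ∑ j, (z j - u j) ^ 2) →
        f z ≥ lam / 2 * ∑ j, (z j - w j) ^ 2)
    (zt zt1 : Fin n → ℝ)
    -- zt1 is the projection of zt − (1/L)∇f(zt) onto Ω
    (hzt1 : (∀ i, ∑ j, C i j * zt1 j ≤ c i) ∧
      ∀ u : Fin n → ℝ, (∀ i, ∑ j, C i j * u j ≤ c i) →
        ∑ j, (zt1 j - (zt j - (1 / L) * gradf zt j)) ^ 2 ≤
          ∑ j, (u j - (zt j - (1 / L) * gradf zt j)) ^ 2)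
    (w0 w1 : Fin n → ℝ)
    -- w0 is the nearest point to zt in the solution set
    (hw0 : ((∀ i, ∑ j, A i j * w0 j ≤ a i) ∧ (∀ i, ∑ j, B i j * w0 j = b i) ∧
        (∀ i, ∑ j, C i j * w0 j ≤ c i)) ∧
      ∀ u : Fin n → ℝ,
        ((∀ i, ∑ j, A i j * u j ≤ a i) ∧ (∀ i, ∑ j, B i j * u j = b i) ∧
          (∀ i, ∑ j, C i j * u j ≤ c i)) →
        ∑ j, (zt j - w0 j) ^ 2 ≤ ∑ j, (zt j - u j) ^ 2)
    -- w1 is the nearest point to zt1 in the solution set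
    (hw1 : ((∀ i, ∑ j, A i j * w1 j ≤ a i) ∧ (∀ i, ∑ j, B i j * w1 j = b i) ∧
        (∀ i, ∑ j, C i j * w1 j ≤ c i)) ∧
      ∀ u : Fin n → ℝ,
        ((∀ i, ∑ j, A i j * u j ≤ a i) ∧ (∀ i, ∑ j, B i j * u j = b i) ∧
          (∀ i, ∑ j, C i j * u j ≤ c i)) →
        ∑ j, (zt1 j - w1 j) ^ 2 ≤ ∑ j, (zt1 j - u j) ^ 2) :
    ∑ j, (zt1 j - w1 j) ^ 2 ≤ (1 / (1 + lam / L)) * ∑ j, (zt j - w0 j) ^ 2 := by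
  let F : EuclideanSpace ℝ (Fin n) → ℝ := fun x => f x.ofLp
  let G : EuclideanSpace ℝ (Fin n) → EuclideanSpace ℝ (Fin n) := fun x =>
    WithLp.toLp 2 (gradf x.ofLp)
  have hsub : ∀ x y, F x + ⟪G x, y - x⟫ ≤ F y := fun x y => by
    have := residual_add_dotProduct_le A a B b hf hgradf x.ofLp y.ofLp
    rwa [dotProduct_comm, ← star_trivial (gradf _), ← EuclideanSpace.inner_toLp_toLp] at this
  have hG : LipschitzWith ⟨L, hL.le⟩ G := LipschitzWith.of_dist_le_mul fun x y => by
    rw [dist_eq_norm, dist_eq_norm, ← sq_le_sq₀ (norm_nonneg _) (by positivity), mul_pow]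
    have := hLip x.ofLp y.ofLp
    rwa [sum_sub_sq_eq_norm_toLp_sub_sq, sum_sub_sq_eq_norm_toLp_sub_sq] at this
  have hdesc := le_add_inner_add_of_lipschitzWith
    (fun x => hasGradientAt_of_subgradient hsub hG.continuous.continuousAt) hG
  have hproj : IsMinOn (fun u => ‖u - (WithLp.toLp 2 zt - L⁻¹ • G (WithLp.toLp 2 zt))‖)
      {x | ∀ i, ∑ j, C i j * x j ≤ c i} (WithLp.toLp 2 zt1) := by
    have hp : WithLp.toLp 2 zt - L⁻¹ • G (WithLp.toLp 2 zt) =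
        WithLp.toLp 2 (fun j => zt j - 1 / L * gradf zt j) := by
      ext j
      simp [G]
    refine isMinOn_iff.2 fun u hu => ?_
    rw [hp, ← sq_le_sq₀ (norm_nonneg _) (norm_nonneg _)]
    simpa [sum_sub_sq_eq_norm_toLp_sub_sq] using hzt1.2 u.ofLp hu
  have hstep : f zt1 ≤ f w0 + L / 2 * (‖WithLp.toLp 2 zt - WithLp.toLp 2 w0‖ ^ 2 -
      ‖WithLp.toLp 2 zt1 - WithLp.toLp 2 w0‖ ^ 2) :=
    projGradStep_le_add (convex_setOf_sum_mul_le C c) hL hsub hdesc hzt1.1 hproj hw0.1.2.2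
  have herr1 := herr zt1 hzt1.1 w1 hw1.1 hw1.2
  have hw10 := hw1.2 w0 hw0.1
  rw [residual_eq_zero A a B b hf hw0.1.1 hw0.1.2.1] at hstep
  simp only [sum_sub_sq_eq_norm_toLp_sub_sq] at herr1 hw10 ⊢
  rw [show 1 / (1 + lam / L) = L / (L + lam) by field_simp, div_mul_eq_mul_div,
    le_div_iff₀ (by positivity)]
  nlinarith

/-- Linear convergence of projected gradient descent for
`f(z) = ‖[Az − a]₊‖² + ‖Bz − b‖²` over `Ω = {z : Cz ≤ c}` with minimum value `0`:
one step `z⁺ = P_Ω(z − (1/L)∇f(z))` contracts the squared distance to the optimal set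
by the factor `1/(1 + λ/L)`, where `λ` comes from the Hoffman error bound. -/
theorem stmt11 {m1 m2 m3 n : ℕ}
    (A : Matrix (Fin m1) (Fin n) ℝ) (a : Fin m1 → ℝ)
    (B : Matrix (Fin m2) (Fin n) ℝ) (b : Fin m2 → ℝ)
    (C : Matrix (Fin m3) (Fin n) ℝ) (c : Fin m3 → ℝ)
    (f : (Fin n → ℝ) → ℝ)
    (hf : ∀ z, f z = ∑ i, max (∑ j, A i j * z j - a i) 0 ^ 2 +
                     ∑ i, (∑ j, B i j * z j - b i) ^ 2)
    (gradf : (Fin n → ℝ) → (Fin n → ℝ))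
    (hgradf : ∀ z k, gradf z k =
        2 * ∑ i, A i k * max (∑ j, A i j * z j - a i) 0 +
        2 * ∑ i, B i k * (∑ j, B i j * z j - b i))
    (L lam : ℝ) (hL : 0 < L) (hlam : 0 < lam)
    -- L-Lipschitz continuity of the gradient
    (hLip : ∀ z w : Fin n → ℝ,
      ∑ k, (gradf z k - gradf w k) ^ 2 ≤ L ^ 2 * ∑ k, (z k - w k) ^ 2)
    -- minimum of f over Ω is zero
    (hmin : ∃ z, (∀ i, ∑ j, C i j * z j ≤ c i) ∧ f z = 0)
    -- error bound on Ω: f(z) ≥ (λ/2)‖z − P_{z*}(z)‖²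
    (herr : ∀ z : Fin n → ℝ, (∀ i, ∑ j, C i j * z j ≤ c i) →
      ∀ w : Fin n → ℝ,
        ((∀ i, ∑ j, A i j * w j ≤ a i) ∧ (∀ i, ∑ j, B i j * w j = b i) ∧
          (∀ i, ∑ j, C i j * w j ≤ c i)) →
        (∀ u : Fin n → ℝ,
          ((∀ i, ∑ j, A i j * u j ≤ a i) ∧ (∀ i, ∑ j, B i j * u j = b i) ∧
            (∀ i, ∑ j, C i j * u j ≤ c i)) →
          ∑ j, (z j - w j) ^ 2 ≤ ∑ j, (z j - u j) ^ 2) →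
        f z ≥ lam / 2 * ∑ j, (z j - w j) ^ 2)
    (zt zt1 : Fin n → ℝ)
    (hzt : ∀ i, ∑ j, C i j * zt j ≤ c i)
    -- zt1 is the projection of zt − (1/L)∇f(zt) onto Ω
    (hzt1 : (∀ i, ∑ j, C i j * zt1 j ≤ c i) ∧
      ∀ u : Fin n → ℝ, (∀ i, ∑ j, C i j * u j ≤ c i) →
        ∑ j, (zt1 j - (zt j - (1 / L) * gradf zt j)) ^ 2 ≤
          ∑ j, (u j - (zt j - (1 / L) * gradf zt j)) ^ 2)
    (w0 w1 : Fin n → ℝ)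
    -- w0 is the nearest point to zt in the solution set
    (hw0 : ((∀ i, ∑ j, A i j * w0 j ≤ a i) ∧ (∀ i, ∑ j, B i j * w0 j = b i) ∧
        (∀ i, ∑ j, C i j * w0 j ≤ c i)) ∧
      ∀ u : Fin n → ℝ,
        ((∀ i, ∑ j, A i j * u j ≤ a i) ∧ (∀ i, ∑ j, B i j * u j = b i) ∧
          (∀ i, ∑ j, C i j * u j ≤ c i)) →
        ∑ j, (zt j - w0 j) ^ 2 ≤ ∑ j, (zt j - u j) ^ 2)
    -- w1 is the nearest point to zt1 in the solution set
    (hw1 : ((∀ i, ∑ j, A i j * w1 j ≤ a i) ∧ (∀ i, ∑ j, B i j * w1 j = b i) ∧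
        (∀ i, ∑ j, C i j * w1 j ≤ c i)) ∧
      ∀ u : Fin n → ℝ,
        ((∀ i, ∑ j, A i j * u j ≤ a i) ∧ (∀ i, ∑ j, B i j * u j = b i) ∧
          (∀ i, ∑ j, C i j * u j ≤ c i)) →
        ∑ j, (zt1 j - w1 j) ^ 2 ≤ ∑ j, (zt1 j - u j) ^ 2) :
    ∑ j, (zt1 j - w1 j) ^ 2 ≤ (1 / (1 + lam / L)) * ∑ j, (zt j - w0 j) ^ 2 :=
  stmt11_general A a B b C c f hf gradf hgradf L lam hL hlam hLip herr zt zt1 hzt1 w0 w1 hw0 hw1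
end
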